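/- Let k ≥ 1, ε ∈ (0,1], and let f: {0,1}^n → {0,1} be k-alternating. Then the Fourier tail of f beyond degree k√n/ε is small: ∑_{S ⊆ [n], |S| > k√n/ε} F̂(S)² ≤ ε, where F = (−1)^f. -/

import Mathlib

/-- Number of alternations of `f` along the chain `X` of `ℓ+1` points:
the number of indices `j` with `f (X j) ≠ f (X (j+1))`. -/
def altCount {n : ℕ} (f : (Fin n → Bool) → Bool) {ℓ : ℕ}
    (X : Fin (ℓ + 1) → (Fin n → Bool)) : ℕ :=
  (Finset.univ.filter (fun j : Fin ℓ => f (X j.castSucc) ≠ f (X j.succ))).card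

/-- `a_f(x)`: the maximum number of alternations of `f` over all
(strictly increasing) chains in `{0,1}^n` starting at `x`. -/
noncomputable def altFrom {n : ℕ} (f : (Fin n → Bool) → Bool) (x : Fin n → Bool) : ℕ :=
  sSup {k | ∃ (ℓ : ℕ) (X : Fin (ℓ + 1) → (Fin n → Bool)),
    StrictMono X ∧ X 0 = x ∧ altCount f X = k}

/-- `a(f)`: the maximum number of alternations of `f` over all
(strictly increasing) chains in `{0,1}^n`. -/
noncomputable def alt {n : ℕ} (f : (Fin n → Bool) → Bool) : ℕ :=
  sSup {k | ∃ (ℓ : ℕ) (X : Fin (ℓ + 1) → (Fin n → Bool)),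
    StrictMono X ∧ altCount f X = k}

/-- Fourier coefficient `F̂(S)` of `F = (-1)^f`. -/
noncomputable def booleanFourier {n : ℕ} (f : (Fin n → Bool) → Bool) (S : Finset (Fin n)) : ℝ :=
  (∑ x : Fin n → Bool,
      (if f x then (-1 : ℝ) else 1) * ∏ i ∈ S, (if x i then (-1 : ℝ) else 1)) / 2 ^ n

/-!
By Parseval, `∑_S |S| F̂(S)²` is the total influence `I(f) = ∑_i Inf_i(f)`, so Markov's inequality
reduces the tail bound to `I(f) ≤ k√n`. Let `a(x)` be the maximal number of alternations of `f`
along chains starting at `x`. The thresholds `g_j = [a < j]`, `1 ≤ j ≤ k`, are monotone, and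
whenever `f` changes along an edge of the cube so does some `g_j`; hence `I(f) ≤ ∑_j I(g_j)`.
For monotone `g` the influence `Inf_i(g)` is the degree-one coefficient `Ĝ({i})`, so
Cauchy–Schwarz and Parseval give `I(g) ≤ √n`.
-/

open Finset

lemma Finset.sum_filter_lt_div_le {ι : Type*} (s : Finset ι) {w a : ι → ℝ} {c ε : ℝ}
    [DecidablePred fun i : ι => c / ε < a i] (hw : ∀ i ∈ s, 0 ≤ w i)
    (ha : ∀ i ∈ s, 0 ≤ a i)
    (hε : 0 < ε) (h : ∑ i ∈ s, a i * w i ≤ c) :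
    ∑ i ∈ s with c / ε < a i, w i ≤ ε := by
  have hterm : ∀ i ∈ s, 0 ≤ a i * w i := fun i hi => mul_nonneg (ha i hi) (hw i hi)
  rcases ((sum_nonneg hterm).trans h).eq_or_lt with rfl | hc
  · have hzero := (sum_eq_zero_iff_of_nonneg hterm).1 (le_antisymm h (sum_nonneg hterm))
    refine le_of_eq_of_le (sum_eq_zero fun i hi => ?_) hε.le
    obtain ⟨hi, hai⟩ := mem_filter.1 hi
    rw [zero_div] at hai
    exact (mul_eq_zero.1 (hzero i hi)).resolve_left hai.ne'
  · calc ∑ i ∈ s with c / ε < a i, w i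
        ≤ ∑ i ∈ s with c / ε < a i, ε / c * (a i * w i) := by
          refine sum_le_sum fun i hi => ?_
          obtain ⟨hi, hai⟩ := mem_filter.1 hi
          rw [div_lt_iff₀ hε] at hai
          rw [div_mul_eq_mul_div, le_div_iff₀ hc]
          nlinarith [hw i hi]
      _ ≤ ε / c * ∑ i ∈ s, a i * w i := by
          rw [← mul_sum]
          gcongr
          · exact fun i hi _ => hterm i hi
          · exact filter_subset _ _
      _ ≤ ε / c * c := by gcongr
      _ = ε := div_mul_cancel₀ ε hc.ne'

section Alternation

variable {n : ℕ} (f : (Fin n → Bool) → Bool)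

lemma altCount_lt_two_pow {ℓ : ℕ} {X : Fin (ℓ + 1) → (Fin n → Bool)} (hX : StrictMono X) :
    altCount f X < 2 ^ n := by
  have hlen := Fintype.card_le_of_injective X hX.injective
  have hcount : altCount f X ≤ ℓ := (card_filter_le _ _).trans (by simp)
  simp only [Fintype.card_fin, Fintype.card_pi, Fintype.card_bool, prod_const,
    card_univ] at hlen
  omega

lemma altCount_cons {ℓ : ℕ} (x : Fin n → Bool) (X : Fin (ℓ + 1) → (Fin n → Bool)) :
    altCount f (Fin.cons x X : Fin (ℓ + 2) → (Fin n → Bool))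
      = (if f x ≠ f (X 0) then 1 else 0) + altCount f X := by
  simp only [altCount, card_filter, Fin.sum_univ_succ, Fin.castSucc_zero, Fin.cons_zero,
    Fin.cons_succ, ← Fin.succ_castSucc]

lemma bddAbove_altFrom_set (x : Fin n → Bool) :
    BddAbove {k | ∃ (ℓ : ℕ) (X : Fin (ℓ + 1) → (Fin n → Bool)),
      StrictMono X ∧ X 0 = x ∧ altCount f X = k} :=
  ⟨2 ^ n, by rintro _ ⟨ℓ, X, hX, -, rfl⟩; exact (altCount_lt_two_pow f hX).le⟩

lemma bddAbove_alt_set :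
    BddAbove {k | ∃ (ℓ : ℕ) (X : Fin (ℓ + 1) → (Fin n → Bool)),
      StrictMono X ∧ altCount f X = k} :=
  ⟨2 ^ n, by rintro _ ⟨ℓ, X, hX, rfl⟩; exact (altCount_lt_two_pow f hX).le⟩

lemma exists_chain_altFrom (x : Fin n → Bool) :
    ∃ (ℓ : ℕ) (X : Fin (ℓ + 1) → (Fin n → Bool)),
      StrictMono X ∧ X 0 = x ∧ altCount f X = altFrom f x := by
  refine Nat.sSup_mem ?_ (bddAbove_altFrom_set f x)
  exact ⟨0, 0, fun _ : Fin 1 => x, Fin.strictMono_iff_lt_succ.2 fun i => i.elim0, rfl,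
    by simp [altCount]⟩

lemma altFrom_le_alt (x : Fin n → Bool) : altFrom f x ≤ alt f := by
  obtain ⟨ℓ, X, hX, -, hcount⟩ := exists_chain_altFrom f x
  exact le_csSup (bddAbove_alt_set f) ⟨ℓ, X, hX, hcount⟩

lemma altFrom_le_of_lt {x y : Fin n → Bool} (hxy : x < y) :
    (if f x ≠ f y then 1 else 0) + altFrom f y ≤ altFrom f x := by
  obtain ⟨ℓ, X, hX, rfl, hcount⟩ := exists_chain_altFrom f y
  refine le_csSup (bddAbove_altFrom_set f x) ⟨ℓ + 1, Fin.cons x X, ?_, Fin.cons_zero _ _, ?_⟩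
  · rw [← Fin.insertNth_zero']
    exact Fin.strictMono_insertNth_zero hX x hxy
  · rw [altCount_cons, hcount]

lemma altFrom_antitone : Antitone (altFrom f) := by
  intro x y hxy
  rcases hxy.eq_or_lt with rfl | hlt
  · exact le_rfl
  · exact le_of_add_le_right (altFrom_le_of_lt f hlt)

end Alternation

namespace BoolCube

variable {n : ℕ}

def boolSign (b : Bool) : ℝ := if b then -1 else 1

lemma boolSign_mul_boolSign (a b : Bool) : boolSign a * boolSign b = boolSign (a ^^ b) := by
  cases a <;> cases b <;> norm_num [boolSign]

def walsh (S : Finset (Fin n)) (x : Fin n → Bool) : ℝ := ∏ i ∈ S, boolSign (x i)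

noncomputable def fourier (F : (Fin n → Bool) → ℝ) (S : Finset (Fin n)) : ℝ :=
  (∑ x, F x * walsh S x) / 2 ^ n

lemma booleanFourier_eq_fourier (f : (Fin n → Bool) → Bool) (S : Finset (Fin n)) :
    booleanFourier f S = fourier (fun x => boolSign (f x)) S := rfl

lemma sum_walsh_mul_walsh (x y : Fin n → Bool) :
    ∑ S, walsh S x * walsh S y = if x = y then 2 ^ n else 0 := by
  have hprod : ∑ S, walsh S x * walsh S y = ∏ i, (1 + boolSign (x i ^^ y i)) := by
    simp only [walsh, ← prod_mul_distrib, boolSign_mul_boolSign, prod_one_add, powerset_univ]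
  rw [hprod]
  split_ifs with hxy
  · simp [hxy, boolSign, one_add_one_eq_two]
  · obtain ⟨i, hi⟩ := Function.ne_iff.mp hxy
    exact prod_eq_zero (mem_univ i) (by simp [boolSign, hi])

lemma sum_fourier_mul_fourier (F G : (Fin n → Bool) → ℝ) :
    ∑ S, fourier F S * fourier G S = (∑ x, F x * G x) / 2 ^ n := by
  have hexpand : ∑ S, (∑ x, F x * walsh S x) * (∑ y, G y * walsh S y)
      = ∑ x, ∑ y, F x * G y * ∑ S, walsh S x * walsh S y := by
    simp_rw [sum_mul_sum, mul_sum]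
    rw [sum_comm]
    refine sum_congr rfl fun x _ => ?_
    rw [sum_comm]
    exact sum_congr rfl fun y _ => sum_congr rfl fun S _ => by ring
  have h2n : (2 : ℝ) ^ n ≠ 0 := by positivity
  simp_rw [fourier, div_mul_div_comm, ← sum_div, hexpand, sum_walsh_mul_walsh, mul_ite, mul_zero,
    sum_ite_eq, mem_univ, if_true, ← sum_mul]
  field_simp

lemma sum_fourier_sq (F : (Fin n → Bool) → ℝ) :
    ∑ S, fourier F S ^ 2 = (∑ x, F x ^ 2) / 2 ^ n := by
  simpa only [sq] using sum_fourier_mul_fourier F F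

lemma sum_fourier_boolSign_sq (g : (Fin n → Bool) → Bool) :
    ∑ S, fourier (fun x => boolSign (g x)) S ^ 2 = 1 := by
  have hsq : ∀ x, boolSign (g x) ^ 2 = 1 := fun x => by cases g x <;> norm_num [boolSign]
  simp [sum_fourier_sq, hsq]

def flipAt (i : Fin n) (x : Fin n → Bool) : Fin n → Bool := Function.update x i (!x i)

lemma flipAt_involutive (i : Fin n) : Function.Involutive (flipAt i) := by
  intro x
  ext j
  by_cases hj : j = i
  · subst hj; simp [flipAt]
  · simp [flipAt, hj]

lemma boolSign_flipAt (i j : Fin n) (x : Fin n → Bool) :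
    boolSign (flipAt i x j) = (if j = i then -1 else 1) * boolSign (x j) := by
  by_cases hj : j = i
  · subst hj; cases hx : x j <;> simp [flipAt, boolSign, hx]
  · simp [flipAt, hj]

lemma walsh_flipAt (S : Finset (Fin n)) (i : Fin n) (x : Fin n → Bool) :
    walsh S (flipAt i x) = (if i ∈ S then -1 else 1) * walsh S x := by
  simp only [walsh, boolSign_flipAt, prod_mul_distrib, prod_ite_eq']

lemma fourier_sub_comp_flipAt (F : (Fin n → Bool) → ℝ) (i : Fin n) (S : Finset (Fin n)) :
    fourier (fun x => F x - F (flipAt i x)) S = if i ∈ S then 2 * fourier F S else 0 := by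
  have hreindex : ∑ x, F (flipAt i x) * walsh S x = ∑ x, F x * walsh S (flipAt i x) := by
    simpa only [Function.Involutive.coe_toPerm, flipAt_involutive i _] using
      Equiv.sum_comp (flipAt_involutive i).toPerm fun y => F y * walsh S (flipAt i y)
  simp only [fourier, sub_mul, sum_sub_distrib, hreindex, walsh_flipAt]
  split_ifs <;> simp only [neg_one_mul, one_mul, mul_neg, sum_neg_distrib] <;> ring

noncomputable def influence (g : (Fin n → Bool) → Bool) (i : Fin n) : ℝ :=
  #{x | g (flipAt i x) ≠ g x} / 2 ^ n

lemma sq_boolSign_sub_boolSign (a b : Bool) :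
    (boolSign a - boolSign b) ^ 2 = 4 * if b ≠ a then 1 else 0 := by
  cases a <;> cases b <;> norm_num [boolSign]

lemma sum_fourier_sq_of_mem (g : (Fin n → Bool) → Bool) (i : Fin n) :
    ∑ S with i ∈ S, fourier (fun x => boolSign (g x)) S ^ 2 = influence g i := by
  -- Parseval for the derivative `F - F ∘ flipAt i`, whose coefficients are `2 F̂(S) [i ∈ S]`
  have h := sum_fourier_sq fun x => boolSign (g x) - boolSign (g (flipAt i x))
  have hlhs : ∑ S, (if i ∈ S then 2 * fourier (fun x => boolSign (g x)) S else 0) ^ 2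
      = 4 * ∑ S with i ∈ S, fourier (fun x => boolSign (g x)) S ^ 2 := by
    rw [sum_filter, mul_sum]
    refine sum_congr rfl fun S _ => ?_
    split_ifs <;> ring
  simp only [fourier_sub_comp_flipAt, hlhs, sq_boolSign_sub_boolSign, ← mul_sum, sum_boole] at h
  rw [mul_div_assoc] at h
  rw [influence]
  linarith

lemma lt_flipAt {x : Fin n → Bool} {i : Fin n} (h : x i = false) : x < flipAt i x := by
  simp [flipAt, h, lt_update_self_iff]

lemma flipAt_lt {x : Fin n → Bool} {i : Fin n} (h : x i = true) : flipAt i x < x := by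
  simpa only [flipAt_involutive i x] using
    lt_flipAt (x := flipAt i x) (i := i) (by simp [flipAt, h])

lemma boolSign_sub_mul_boolSign_of_monotone {g : (Fin n → Bool) → Bool} (hg : Monotone g)
    (i : Fin n) (x : Fin n → Bool) :
    (boolSign (g x) - boolSign (g (flipAt i x))) * boolSign (x i)
      = 2 * if g (flipAt i x) ≠ g x then 1 else 0 := by
  cases hxi : x i
  · have := hg (lt_flipAt hxi).le
    revert this
    cases g x <;> cases g (flipAt i x) <;> norm_num [boolSign]
  · have := hg (flipAt_lt hxi).le
    revert this
    cases g x <;> cases g (flipAt i x) <;> norm_num [boolSign]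

lemma fourier_singleton_of_monotone {g : (Fin n → Bool) → Bool} (hg : Monotone g) (i : Fin n) :
    fourier (fun x => boolSign (g x)) {i} = influence g i := by
  have h := fourier_sub_comp_flipAt (fun x => boolSign (g x)) i {i}
  have hderiv : fourier (fun x => boolSign (g x) - boolSign (g (flipAt i x))) {i}
      = 2 * influence g i := by
    simp only [fourier, walsh, prod_singleton, boolSign_sub_mul_boolSign_of_monotone hg,
      ← mul_sum, sum_boole, influence]
    ring
  rw [if_pos (mem_singleton_self i), hderiv] at h
  linarith

lemma sum_influence_le_sqrt_of_monotone {g : (Fin n → Bool) → Bool} (hg : Monotone g) :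
    ∑ i, influence g i ≤ √n := by
  set a : Fin n → ℝ := fun i => fourier (fun x => boolSign (g x)) {i}
  have hsq : ∑ i, a i ^ 2 ≤ 1 := by
    calc ∑ i, a i ^ 2 = ∑ S ∈ univ.image singleton, fourier (fun x => boolSign (g x)) S ^ 2 :=
          (sum_image (f := fun S => fourier (fun x => boolSign (g x)) S ^ 2)
            fun i _ j _ h => singleton_injective h).symm
      _ ≤ ∑ S, fourier (fun x => boolSign (g x)) S ^ 2 :=
          sum_le_sum_of_subset_of_nonneg (subset_univ _) fun S _ _ => sq_nonneg _
      _ = 1 := sum_fourier_boolSign_sq g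
  have hcs : (∑ i, a i) ^ 2 ≤ n := by
    calc (∑ i, a i) ^ 2 ≤ n * ∑ i, a i ^ 2 := by
          simpa using sq_sum_le_card_mul_sum_sq (s := univ) (f := a)
      _ ≤ n := by nlinarith [n.cast_nonneg (α := ℝ)]
  simp only [← fourier_singleton_of_monotone hg]
  exact (le_abs_self _).trans (Real.abs_le_sqrt hcs)

lemma sum_card_mul_fourier_sq (g : (Fin n → Bool) → Bool) :
    ∑ S, (#S : ℝ) * fourier (fun x => boolSign (g x)) S ^ 2 = ∑ i, influence g i := by
  simp only [← sum_fourier_sq_of_mem, sum_filter]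
  rw [sum_comm]
  refine sum_congr rfl fun S _ => ?_
  rw [Fintype.sum_ite_mem, sum_const, nsmul_eq_mul]

noncomputable def altFromLt (f : (Fin n → Bool) → Bool) (j : ℕ) (x : Fin n → Bool) : Bool :=
  decide (altFrom f x < j)

lemma monotone_altFromLt (f : (Fin n → Bool) → Bool) (j : ℕ) : Monotone (altFromLt f j) :=
  fun _ _ hxy => by
    simpa [altFromLt, Bool.le_iff_imp] using (altFrom_antitone f hxy).trans_lt

lemma exists_altFromLt_ne {f : (Fin n → Bool) → Bool} {k : ℕ} (hf : alt f ≤ k)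
    {x y : Fin n → Bool} (hxy : x < y) (hne : f x ≠ f y) :
    ∃ j ∈ Icc 1 k, altFromLt f j x ≠ altFromLt f j y := by
  have hstep := altFrom_le_of_lt f hxy
  rw [if_pos hne] at hstep
  refine ⟨altFrom f x, mem_Icc.2 ⟨by omega, (altFrom_le_alt f x).trans hf⟩, ?_⟩
  simp only [altFromLt, lt_irrefl, decide_false, ne_eq, Bool.false_eq, decide_eq_false_iff_not,
    not_lt, not_le]
  omega

lemma influence_le_sum_influence_altFromLt {f : (Fin n → Bool) → Bool} {k : ℕ}
    (hf : alt f ≤ k) (i : Fin n) :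
    influence f i ≤ ∑ j ∈ Icc 1 k, influence (altFromLt f j) i := by
  have hsub : ({x | f (flipAt i x) ≠ f x} : Finset _)
      ⊆ (Icc 1 k).biUnion fun j => {x | altFromLt f j (flipAt i x) ≠ altFromLt f j x} := by
    intro x hx
    simp only [mem_filter, mem_univ, true_and, mem_biUnion] at hx ⊢
    cases hxi : x i
    · obtain ⟨j, hj, hne⟩ := exists_altFromLt_ne hf (lt_flipAt hxi) (Ne.symm hx)
      exact ⟨j, hj, Ne.symm hne⟩
    · exact exists_altFromLt_ne hf (flipAt_lt hxi) hx
  have hcard := (card_le_card hsub).trans card_biUnion_le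
  simp only [influence, ← sum_div]
  gcongr
  exact_mod_cast hcard

lemma sum_influence_le_of_alt_le {f : (Fin n → Bool) → Bool} {k : ℕ} (hf : alt f ≤ k) :
    ∑ i, influence f i ≤ k * √n :=
  calc ∑ i, influence f i ≤ ∑ i, ∑ j ∈ Icc 1 k, influence (altFromLt f j) i :=
        sum_le_sum fun i _ => influence_le_sum_influence_altFromLt hf i
    _ = ∑ j ∈ Icc 1 k, ∑ i, influence (altFromLt f j) i := sum_comm
    _ ≤ ∑ j ∈ Icc 1 k, √n :=
        sum_le_sum fun j _ => sum_influence_le_sqrt_of_monotone (monotone_altFromLt f j)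
    _ = k * √n := by simp

end BoolCube

open scoped Classical in
theorem stmt12_general {n : ℕ} (k : ℕ) (ε : ℝ) (hε0 : 0 < ε)
    (f : (Fin n → Bool) → Bool) (hf : alt f ≤ k) :
    ∑ S ∈ Finset.univ.filter
        (fun S : Finset (Fin n) => (k : ℝ) * Real.sqrt n / ε < (S.card : ℝ)),
      (booleanFourier f S) ^ 2 ≤ ε := by
  simp only [BoolCube.booleanFourier_eq_fourier]
  refine Finset.sum_filter_lt_div_le (a := fun S : Finset (Fin n) => (S.card : ℝ)) _
    (fun S _ => sq_nonneg _) (fun S _ => S.card.cast_nonneg) hε0 ?_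
  rw [BoolCube.sum_card_mul_fourier_sq]
  exact BoolCube.sum_influence_le_of_alt_le hf

open scoped Classical in
/-- A `k`-alternating function has Fourier tail `∑_{|S| > k√n/ε} F̂(S)² ≤ ε`. -/
theorem stmt12 {n : ℕ} (k : ℕ) (hk : 1 ≤ k) (ε : ℝ) (hε0 : 0 < ε) (hε1 : ε ≤ 1)
    (f : (Fin n → Bool) → Bool) (hf : alt f ≤ k) :
    ∑ S ∈ Finset.univ.filter
        (fun S : Finset (Fin n) => (k : ℝ) * Real.sqrt n / ε < (S.card : ℝ)),
      (booleanFourier f S) ^ 2 ≤ ε :=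
  stmt12_general k ε hε0 f hf
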